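/- arXiv:1807.01750 — 4 statements merged into one kernel-verified Lean document; each statement's English description precedes it below -/
import Mathlib

section
/- Let h > 0 and let K(z) = exp(−‖z‖²/(2h)) be the Gaussian kernel on ℝ^D. Let q be a probability density on ℝ^D that is continuously differentiable, strictly positive, with ∇q integrable, and such that q(x) → 0 as ‖x‖ → ∞. Let p be a continuously differentiable strictly positive probability density with ∫ ‖∇log p(x)‖ q(x) dx < ∞. Then for every y ∈ ℝ^D, ∫_{ℝ^D} [K(x − y) ∇log p(x) + ∇_x K(x − y)] q(x) dx = ∫_{ℝ^D} K(x − y) (∇log p(x) − ∇log q(x)) q(x) dx. -/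
open MeasureTheory Filter
open InnerProductSpace
open scoped RealInnerProductSpace

/-! Expanding both integrands (the right one using `q > 0`), the two sides differ only in
`∫ q ∇ₓK(x - y)` versus `-∫ K(x - y) ∇q`. These agree by integration by parts in every
direction: `q` is bounded, being continuous and vanishing at infinity, while the Gaussian, its
gradient and `∇q` are integrable, so all products are integrable and no boundary term survives. -/

theorem exists_forall_norm_le_of_tendsto_cocompact_zero {X F : Type*} [TopologicalSpace X]
    [NormedAddCommGroup F] {f : X → F} (hf : Continuous f)
    (hf_zero : Tendsto f (cocompact X) (nhds 0)) : ∃ C, ∀ x, ‖f x‖ ≤ C :=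
  let f₀ : ZeroAtInftyContinuousMap X F := ⟨⟨f, hf⟩, hf_zero⟩
  ⟨‖f₀‖, fun x => (f₀.toBCF.norm_coe_le_norm x).trans_eq f₀.norm_toBCF_eq_norm⟩

theorem integral_add_eq_integral_sub_of_integral_eq_neg {α F : Type*} [MeasurableSpace α]
    {μ : Measure α} [NormedAddCommGroup F] [NormedSpace ℝ F] {f g k : α → F}
    (hg : Integrable g μ) (hk : Integrable k μ) (hgk : ∫ x, g x ∂μ = -∫ x, k x ∂μ) :
    ∫ x, f x + g x ∂μ = ∫ x, f x - k x ∂μ := by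
  by_cases hf : Integrable f μ
  · rw [integral_add hf hg, integral_sub hf hk, hgk, sub_eq_add_neg]
  -- otherwise neither integrand is integrable, and both integrals are the junk value `0`
  · have hfg : ¬Integrable (fun x => f x + g x) μ := fun hfg =>
      hf ((hfg.sub hg).congr (ae_of_all _ fun x => add_sub_cancel_right (f x) (g x)))
    have hfk : ¬Integrable (fun x => f x - k x) μ := fun hfk =>
      hf ((hfk.add hk).congr (ae_of_all _ fun x => sub_add_cancel (f x) (k x)))
    rw [integral_undef hfg, integral_undef hfk]

theorem mul_exp_neg_sq_div_le {h : ℝ} (hh : 0 < h) (t : ℝ) :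
    t * Real.exp (-t ^ 2 / (2 * h)) ≤ Real.exp h * Real.exp (-t ^ 2 / (2 * (2 * h))) := by
  -- `t ≤ eᵗ` trades the factor `t` for half of the Gaussian decay
  have ht : t ≤ Real.exp t := by linarith [Real.add_one_le_exp t]
  have hsq : (h - t ^ 2 / (2 * (2 * h))) - (t - t ^ 2 / (2 * h)) = (t - 2 * h) ^ 2 / (4 * h) := by
    field_simp; ring
  calc t * Real.exp (-t ^ 2 / (2 * h))
      ≤ Real.exp t * Real.exp (-t ^ 2 / (2 * h)) := by gcongr
    _ = Real.exp (t - t ^ 2 / (2 * h)) := by rw [← Real.exp_add]; ring_nf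
    _ ≤ Real.exp (h - t ^ 2 / (2 * (2 * h))) :=
        Real.exp_le_exp.2 (by linarith [show 0 ≤ (t - 2 * h) ^ 2 / (4 * h) by positivity])
    _ = Real.exp h * Real.exp (-t ^ 2 / (2 * (2 * h))) := by rw [← Real.exp_add]; ring_nf

theorem norm_exp_neg_sq_div_le_one {h : ℝ} (hh : 0 ≤ h) (t : ℝ) :
    ‖Real.exp (-t ^ 2 / (2 * h))‖ ≤ 1 := by
  rw [Real.norm_of_nonneg (Real.exp_nonneg _), Real.exp_le_one_iff, neg_div, neg_nonpos]
  positivity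

variable {E : Type*} [NormedAddCommGroup E] [InnerProductSpace ℝ E]

theorem inner_smul_gradient [CompleteSpace E] (c : ℝ) (f : E → ℝ) (x v : E) :
    ⟪c • gradient f x, v⟫ = c * fderiv ℝ f x v := by
  rw [real_inner_smul_left, gradient, toDual_symm_apply]

theorem hasGradientAt_exp_neg_sq_norm_sub_div [CompleteSpace E] (h : ℝ) (y x : E) :
    HasGradientAt (fun x' => Real.exp (-‖x' - y‖ ^ 2 / (2 * h)))
      ((-h⁻¹ * Real.exp (-‖x - y‖ ^ 2 / (2 * h))) • (x - y)) x := by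
  rw [hasGradientAt_iff_hasFDerivAt]
  have hK := (((hasFDerivAt_id x).sub_const y).norm_sq.neg.mul_const (2 * h)⁻¹).exp
  simp only [id, ← div_eq_mul_inv] at hK
  refine hK.congr_fderiv ?_
  ext v
  simp
  ring

variable [FiniteDimensional ℝ E] [MeasurableSpace E] [BorelSpace E]

theorem integral_smul_gradient_eq_neg_integral_smul_gradient {μ : Measure E}
    [μ.IsAddHaarMeasure] {f g : E → ℝ} (hf : Differentiable ℝ f) (hg : Differentiable ℝ g)
    (hfg' : Integrable (fun x => f x • gradient g x) μ)
    (hgf' : Integrable (fun x => g x • gradient f x) μ)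
    (hfg : Integrable (fun x => f x * g x) μ) :
    ∫ x, f x • gradient g x ∂μ = -∫ x, g x • gradient f x ∂μ := by
  refine ext_inner_right ℝ fun v => ?_
  have hinner : ∀ {F : E → E}, Integrable F μ →
      ⟪∫ x, F x ∂μ, v⟫ = ∫ x, ⟪F x, v⟫ ∂μ :=
    fun hF => by simp_rw [real_inner_comm v]; exact (integral_inner hF v).symm
  have hfg'_v := hfg'.inner_const (𝕜 := ℝ) v
  have hgf'_v := hgf'.inner_const (𝕜 := ℝ) v
  simp only [inner_neg_left, hinner hfg', hinner hgf', inner_smul_gradient] at hfg'_v hgf'_v ⊢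
  simp_rw [mul_comm (g _)] at hgf'_v ⊢
  exact integral_mul_fderiv_eq_neg_fderiv_mul_of_integrable hgf'_v hfg'_v hfg
    (fun x _ => hf x) (fun x _ => hg x)

theorem integrable_exp_neg_mul_sq_norm {b : ℝ} (hb : 0 < b) :
    Integrable (fun x : E => Real.exp (-b * ‖x‖ ^ 2)) := by
  have := (GaussianFourier.integrable_cexp_neg_mul_sq_norm_add
    (V := E) (b := (b : ℂ)) (by simpa using hb) 0 0).norm
  simpa [Complex.norm_exp, ← Complex.ofReal_pow] using this

theorem integrable_exp_neg_sq_norm_div {h : ℝ} (hh : 0 < h) :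
    Integrable (fun x : E => Real.exp (-‖x‖ ^ 2 / (2 * h))) := by
  simpa only [neg_mul, div_eq_inv_mul, mul_neg] using
    integrable_exp_neg_mul_sq_norm (E := E) (inv_pos.2 (mul_pos two_pos hh))

theorem integrable_gradient_exp_neg_sq_norm_sub_div {h : ℝ} (hh : 0 < h) (y : E) :
    Integrable (gradient fun x : E => Real.exp (-‖x - y‖ ^ 2 / (2 * h))) := by
  rw [gradient_eq (hasGradientAt_exp_neg_sq_norm_sub_div h y)]
  have hmoment :
      Integrable (fun x : E => Real.exp h * Real.exp (-‖x - y‖ ^ 2 / (2 * (2 * h)))) :=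
    ((integrable_exp_neg_sq_norm_div (by positivity)).comp_sub_right y).const_mul _
  refine (hmoment.const_mul h⁻¹).mono' (by fun_prop) (ae_of_all _ fun x => ?_)
  rw [norm_smul, norm_mul, norm_neg, Real.norm_of_nonneg (inv_nonneg.2 hh.le),
    Real.norm_of_nonneg (Real.exp_nonneg _), mul_assoc]
  exact mul_le_mul_of_nonneg_left ((mul_comm _ _).trans_le (mul_exp_neg_sq_div_le hh ‖x - y‖))
    (inv_nonneg.2 hh.le)

theorem svgd_field_eq_smoothed_gradient_flow_field_general
    (D : ℕ) (h : ℝ) (hh : 0 < h)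
    (K : EuclideanSpace ℝ (Fin D) → ℝ)
    (hK : K = fun z => Real.exp (-‖z‖ ^ 2 / (2 * h)))
    (p q : EuclideanSpace ℝ (Fin D) → ℝ)
    (hq : ContDiff ℝ 1 q) (hqpos : ∀ x, 0 < q x)
    (hqgrad : Integrable (fun x => gradient q x))
    (hqdecay : Tendsto q (cocompact (EuclideanSpace ℝ (Fin D))) (nhds 0)) :
    ∀ y : EuclideanSpace ℝ (Fin D),
      ∫ x, q x • (K (x - y) • ((p x)⁻¹ • gradient p x)
            + gradient (fun x' => K (x' - y)) x)
        = ∫ x, (q x * K (x - y)) •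
            ((p x)⁻¹ • gradient p x - (q x)⁻¹ • gradient q x) := by
  subst hK
  intro y
  obtain ⟨C, hC⟩ := exists_forall_norm_le_of_tendsto_cocompact_zero hq.continuous hqdecay
  have hKdiff : Differentiable ℝ fun x : EuclideanSpace ℝ (Fin D) =>
      Real.exp (-‖x - y‖ ^ 2 / (2 * h)) :=
    fun x => (hasGradientAt_exp_neg_sq_norm_sub_div h y x).differentiableAt
  have hq_gradK := (integrable_gradient_exp_neg_sq_norm_sub_div hh y).bdd_smul C
    hq.continuous.aestronglyMeasurable (ae_of_all _ hC)
  have hK_gradq := hqgrad.bdd_smul 1 hKdiff.continuous.aestronglyMeasurable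
    (ae_of_all _ fun x => norm_exp_neg_sq_div_le_one hh.le ‖x - y‖)
  have hqK := ((integrable_exp_neg_sq_norm_div hh).comp_sub_right y).bdd_mul
    hq.continuous.aestronglyMeasurable (ae_of_all _ hC)
  calc _ = ∫ x, (q x * Real.exp (-‖x - y‖ ^ 2 / (2 * h))) • ((p x)⁻¹ • gradient p x)
          + q x • gradient (fun x' => Real.exp (-‖x' - y‖ ^ 2 / (2 * h))) x := by
        simp only [smul_add, smul_smul, mul_assoc]
    _ = ∫ x, (q x * Real.exp (-‖x - y‖ ^ 2 / (2 * h))) • ((p x)⁻¹ • gradient p x)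
          - Real.exp (-‖x - y‖ ^ 2 / (2 * h)) • gradient q x :=
        integral_add_eq_integral_sub_of_integral_eq_neg hq_gradK hK_gradq
          (integral_smul_gradient_eq_neg_integral_smul_gradient
            (hq.differentiable one_ne_zero) hKdiff hq_gradK hK_gradq hqK)
    _ = _ := by
        refine integral_congr_ae (ae_of_all _ fun x => ?_)
        dsimp only
        rw [smul_sub _ _ ((q x)⁻¹ • _), smul_smul _ (q x)⁻¹, mul_right_comm,
          mul_inv_cancel₀ (hqpos x).ne', one_mul]

/-- With the Gaussian kernel `K(z) = exp(−‖z‖²/(2h))`, for suitable densities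
`p, q` on `ℝ^D`, the SVGD vector field is the kernel smoothing of the Wasserstein gradient-flow
vector field `∇log p − ∇log q` against `q`:
`∫ [K(x−y) ∇log p(x) + ∇ₓK(x−y)] q(x) dx = ∫ K(x−y) (∇log p(x) − ∇log q(x)) q(x) dx`. -/
theorem svgd_field_eq_smoothed_gradient_flow_field
    (D : ℕ) (h : ℝ) (hh : 0 < h)
    (K : EuclideanSpace ℝ (Fin D) → ℝ)
    (hK : K = fun z => Real.exp (-‖z‖ ^ 2 / (2 * h)))
    (p q : EuclideanSpace ℝ (Fin D) → ℝ)
    (hq : ContDiff ℝ 1 q) (hqpos : ∀ x, 0 < q x)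
    (hqprob : ∫ x, q x = 1)
    (hqgrad : Integrable (fun x => gradient q x))
    (hqdecay : Tendsto q (cocompact (EuclideanSpace ℝ (Fin D))) (nhds 0))
    (hp : ContDiff ℝ 1 p) (hppos : ∀ x, 0 < p x)
    (hpprob : ∫ x, p x = 1)
    (hplog : Integrable (fun x => ‖(p x)⁻¹ • gradient p x‖ * q x)) :
    ∀ y : EuclideanSpace ℝ (Fin D),
      ∫ x, q x • (K (x - y) • ((p x)⁻¹ • gradient p x)
            + gradient (fun x' => K (x' - y)) x)
        = ∫ x, (q x * K (x - y)) •
            ((p x)⁻¹ • gradient p x - (q x)⁻¹ • gradient q x) :=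
  svgd_field_eq_smoothed_gradient_flow_field_general D h hh K hK p q hq hqpos hqgrad hqdecay
end

section
/- Let n ≥ 2 be an integer, I_n = ∫_{−1}^{1} (1 − x²)^n dx = √π Γ(n+1)/Γ(n+3/2), and χ_n(x) = I_n^{−1/2}(1 − x²)^{n/2} for x ∈ (−1,1). Then the derivative of χ_n at the point x = −1/√n equals π^{−1/4} √(Γ(n+3/2)/Γ(n+1)) · √n · (1 − 1/n)^{(n−2)/2}, and this value is strictly greater than π^{−1/4} √n (1 − 1/n)^{(n−2)/2}. -/
open MeasureTheory

/-- `I_n = ∫_{−1}^{1} (1 − x²)^n dx` (which equals `√π Γ(n+1)/Γ(n+3/2)`). -/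
noncomputable def In (n : ℕ) : ℝ := ∫ x in (-1:ℝ)..1, (1 - x ^ 2) ^ n

/-- The normalized bump function `χ_n(x) = I_n^{−1/2} (1 − x²)^{n/2}` on `[−1, 1]`,
extended by `0` outside. -/
noncomputable def chi (n : ℕ) (x : ℝ) : ℝ :=
  if x ∈ Set.Icc (-1 : ℝ) 1 then (In n) ^ (-(1:ℝ)/2) * (1 - x ^ 2) ^ ((n : ℝ)/2) else 0

/-! The closed form of `I_n` follows from the recursion `(2n+3) I_{n+1} = (2n+2) I_n`, obtained by
integrating the derivative of `x (1 - x²)^{n+1}`, which vanishes at `±1`; it matches the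
recursion `Γ(s+1) = s Γ(s)`. At `x₀ = -1/√n` one has `1 - x₀² = 1 - 1/n` and `-n x₀ = √n`, so the
derivative formula `χ_n' (x) = -n I_n^{-1/2} x (1 - x²)^{(n-2)/2}` gives the value, and the strict
inequality is `Γ(n+1) < Γ(n+3/2)`, by monotonicity of `Γ` on `[2, ∞)`. -/

open Real

lemma hasDerivAt_mul_one_sub_sq_pow (n : ℕ) (x : ℝ) :
    HasDerivAt (fun x : ℝ => x * (1 - x ^ 2) ^ (n + 1))
      ((2 * n + 3) * (1 - x ^ 2) ^ (n + 1) - (2 * n + 2) * (1 - x ^ 2) ^ n) x := by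
  have hq : HasDerivAt (fun x : ℝ => 1 - x ^ 2) (-(2 * x)) x := by
    simpa using (hasDerivAt_pow 2 x).const_sub 1
  refine ((hasDerivAt_id x).mul (hq.pow (n + 1))).congr_deriv ?_
  simp only [Pi.pow_apply, id_eq, Nat.add_sub_cancel, Nat.cast_add, Nat.cast_one]
  ring

lemma two_mul_add_three_mul_In_succ (n : ℕ) :
    (2 * n + 3) * In (n + 1) = (2 * n + 2) * In n := by
  have hint : ∀ k : ℕ, IntervalIntegrable (fun x : ℝ => (1 - x ^ 2) ^ k) volume (-1) 1 :=
    fun k => (by fun_prop : Continuous fun x : ℝ => (1 - x ^ 2) ^ k).intervalIntegrable _ _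
  have hFTC := intervalIntegral.integral_eq_sub_of_hasDerivAt
    (fun x _ => hasDerivAt_mul_one_sub_sq_pow n x)
    (((hint (n + 1)).const_mul _).sub ((hint n).const_mul _))
  rw [intervalIntegral.integral_sub ((hint (n + 1)).const_mul _) ((hint n).const_mul _),
    intervalIntegral.integral_const_mul, intervalIntegral.integral_const_mul] at hFTC
  norm_num at hFTC
  rw [In, In]
  linarith

lemma In_mul_Gamma (n : ℕ) : In n * Gamma (n + 3 / 2) = √π * Gamma (n + 1) := by
  induction n with
  | zero =>
    have hI0 : In 0 = 2 := by norm_num [In]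
    rw [hI0, Nat.cast_zero, zero_add, zero_add, Gamma_one,
      show (3 / 2 : ℝ) = 1 / 2 + 1 by norm_num, Gamma_add_one (by norm_num), Gamma_one_half_eq]
    ring
  | succ n ih =>
    have hrec := two_mul_add_three_mul_In_succ n
    push_cast
    rw [show (n : ℝ) + 1 + 3 / 2 = n + 3 / 2 + 1 by ring, Gamma_add_one (by positivity),
      Gamma_add_one (by positivity)]
    linear_combination (Gamma (n + 3 / 2) / 2) * hrec + ((n : ℝ) + 1) * ih

lemma In_eq (n : ℕ) : In n = √π * Gamma (n + 1) / Gamma (n + 3 / 2) :=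
  eq_div_of_mul_eq (Gamma_pos_of_pos (by positivity)).ne' (In_mul_Gamma n)

lemma In_rpow_neg_half (n : ℕ) :
    In n ^ (-(1 : ℝ) / 2) = π ^ (-(1 : ℝ) / 4) * √(Gamma (n + 3 / 2) / Gamma (n + 1)) := by
  have hΓ₁ := Gamma_pos_of_pos (show (0 : ℝ) < n + 1 by positivity)
  have hΓ₂ := Gamma_pos_of_pos (show (0 : ℝ) < n + 3 / 2 by positivity)
  rw [In_eq, mul_div_assoc, mul_rpow (sqrt_nonneg _) (by positivity), sqrt_eq_rpow,
    ← rpow_mul pi_pos.le, ← inv_div (Gamma (n + 3 / 2)), inv_rpow (by positivity),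
    ← rpow_neg (by positivity), sqrt_eq_rpow]
  norm_num

lemma chi_hasDerivAt {n : ℕ} {x : ℝ} (hx : x ∈ Set.Ioo (-1 : ℝ) 1) :
    HasDerivAt (chi n) (-n * In n ^ (-(1 : ℝ) / 2) * x * (1 - x ^ 2) ^ (((n : ℝ) - 2) / 2)) x := by
  have hbase : 1 - x ^ 2 ≠ 0 := by nlinarith [hx.1, hx.2]
  have hq : HasDerivAt (fun x : ℝ => 1 - x ^ 2) (-(2 * x)) x := by
    simpa using (hasDerivAt_pow 2 x).const_sub 1
  have hchi :
      (fun y : ℝ => In n ^ (-(1 : ℝ) / 2) * (1 - y ^ 2) ^ ((n : ℝ) / 2)) =ᶠ[nhds x] chi n := by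
    filter_upwards [Ioo_mem_nhds hx.1 hx.2] with y hy
    rw [chi, if_pos (Set.mem_Icc_of_Ioo hy)]
  refine (((hq.rpow_const (Or.inl hbase)).const_mul _).congr_of_eventuallyEq hchi.symm
    ).congr_deriv ?_
  rw [show (n : ℝ) / 2 - 1 = ((n : ℝ) - 2) / 2 by ring]
  ring

lemma one_lt_Gamma_add_three_halves_div_Gamma_add_one {n : ℕ} (hn : 1 ≤ n) :
    1 < Gamma (n + 3 / 2) / Gamma (n + 1) := by
  have hn' : (1 : ℝ) ≤ n := by exact_mod_cast hn
  rw [one_lt_div (Gamma_pos_of_pos (by positivity))]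
  exact Gamma_strictMonoOn_Ici (by simp; linarith) (by simp; linarith) (by linarith)

/-- For `n ≥ 2`, the derivative of `χ_n` at `x = −1/√n` equals
`π^{−1/4} √(Γ(n+3/2)/Γ(n+1)) √n (1 − 1/n)^{(n−2)/2}`, and this value is strictly larger
than `π^{−1/4} √n (1 − 1/n)^{(n−2)/2}`. -/
theorem chi_hasDerivAt_neg_one_div_sqrt (n : ℕ) (hn : 2 ≤ n) :
    HasDerivAt (chi n)
      (Real.pi ^ (-(1:ℝ)/4) * Real.sqrt (Real.Gamma (n + 3/2) / Real.Gamma (n + 1))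
        * Real.sqrt n * (1 - 1/(n:ℝ)) ^ (((n:ℝ) - 2)/2))
      (-1 / Real.sqrt n)
    ∧ Real.pi ^ (-(1:ℝ)/4) * Real.sqrt n * (1 - 1/(n:ℝ)) ^ (((n:ℝ) - 2)/2)
      < Real.pi ^ (-(1:ℝ)/4) * Real.sqrt (Real.Gamma (n + 3/2) / Real.Gamma (n + 1))
        * Real.sqrt n * (1 - 1/(n:ℝ)) ^ (((n:ℝ) - 2)/2) := by
  have hn' : (2 : ℝ) ≤ n := by exact_mod_cast hn
  have hsqrt : 1 < √(n : ℝ) := by rw [lt_sqrt zero_le_one]; linarith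
  have hx₀ : -1 / √(n : ℝ) ∈ Set.Ioo (-1 : ℝ) 1 := by
    constructor
    · rw [neg_div, neg_lt_neg_iff, div_lt_one (by linarith)]; exact hsqrt
    · exact (div_neg_of_neg_of_pos (by norm_num) (by linarith)).trans one_pos
  have hx₀_sq : (-1 / √(n : ℝ)) ^ 2 = 1 / n := by
    rw [div_pow, sq_sqrt (by linarith)]; norm_num
  have hn_mul : -(n : ℝ) * (-1 / √(n : ℝ)) = √n := by
    rw [neg_div, mul_neg, neg_mul, neg_neg, mul_one_div, div_sqrt]
  refine ⟨?_, ?_⟩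
  · convert chi_hasDerivAt (n := n) hx₀ using 1
    rw [hx₀_sq, In_rpow_neg_half]
    linear_combination -(π ^ (-(1 : ℝ) / 4) * √(Gamma (n + 3 / 2) / Gamma (n + 1))
      * (1 - 1 / (n : ℝ)) ^ (((n : ℝ) - 2) / 2)) * hn_mul
  · have hratio : 1 < √(Gamma (n + 3 / 2) / Gamma (n + 1)) := by
      rw [lt_sqrt zero_le_one, one_pow]
      exact one_lt_Gamma_add_three_halves_div_Gamma_add_one (by omega)
    have hbase : 0 < 1 - 1 / (n : ℝ) := by
      rw [sub_pos, div_lt_one (by linarith)]; linarith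
    have hfactor : 0 < π ^ (-(1 : ℝ) / 4) * √(n : ℝ) * (1 - 1 / (n : ℝ)) ^ (((n : ℝ) - 2) / 2) :=
      mul_pos (by positivity) (rpow_pos_of_pos hbase _)
    nlinarith
end

section
/- Let r > 0, D ≥ 1, and define ξ_n : ℝ^D → ℝ by ξ_n(x) = r^{−D/2} ∏_{β=1}^D χ_n(x_β / r), where χ_n(x) = I_n^{−1/2}(1 − x²)^{n/2} on [−1,1] (extended by 0) and I_n = ∫_{−1}^{1}(1−x²)^n dx. Let ε_n = (r/√n)(1, 1, …, 1) ∈ ℝ^D. Then for every coordinate α ∈ {1, …, D}, the partial derivative ∂_α ξ_n evaluated at the point −ε_n tends to +∞ as n → ∞. -/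
open MeasureTheory Filter

/-- The `D`-dimensional product bump function
`ξ_n(x₁, …, x_D) = r^{−D/2} ∏_{β=1}^D χ_n(x_β / r)`. -/
noncomputable def xiBump (D : ℕ) (r : ℝ) (n : ℕ) (x : EuclideanSpace ℝ (Fin D)) : ℝ :=
  r ^ (-(D:ℝ)/2) * ∏ β : Fin D, chi n (x β / r)

/-- The shift vector `ε_n = (r/√n)(1, …, 1) ∈ ℝ^D`. -/
noncomputable def epsShift (D : ℕ) (r : ℝ) (n : ℕ) : EuclideanSpace ℝ (Fin D) :=
  WithLp.toLp 2 (fun _ => r / Real.sqrt n)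

/-!
At `-ε_n` every coordinate of `x / r` equals `s = -1/√n`, so
`∂_α ξ_n(-ε_n) = r^{-D/2} χ_n(s)^{D-1} χ_n'(s) / r`, where `χ_n(s) = I_n^{-1/2} (1 - 1/n)^{n/2}` and
`χ_n'(s) = I_n^{-1/2} √n (1 - 1/n)^{n/2-1}`. Since `I_n ≤ 2` and `(1 - 1/n)^y ≥ e^{-2}` for
`0 ≤ y ≤ n`, both `χ_n(s)` and `χ_n'(s) / √n` are at least `2^{-1/2} e^{-2}`, so the partial
derivative grows at least like a positive multiple of `√n`.
-/

open Real Finset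

theorem fderiv_const_mul_prod_apply_single {ι : Type*} [Fintype ι] [DecidableEq ι]
    {g g' : ℝ → ℝ} {p : EuclideanSpace ℝ ι} (hg : ∀ β, HasDerivAt g (g' (p β)) (p β))
    (c : ℝ) (α : ι) :
    fderiv ℝ (fun x : EuclideanSpace ℝ ι => c * ∏ β, g (x β)) p (EuclideanSpace.single α 1) =
      c * ((∏ γ ∈ univ.erase α, g (p γ)) * g' (p α)) := by
  have h : HasFDerivAt (fun x : EuclideanSpace ℝ ι => c * ∏ β, g (x β)) _ p :=
    (HasFDerivAt.finsetProd (u := univ) fun β _ =>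
      (hg β).comp_hasFDerivAt p (EuclideanSpace.proj (𝕜 := ℝ) β).hasFDerivAt).const_mul c
  rw [h.fderiv]
  simp

lemma exp_neg_two_le_one_sub_inv_rpow {n : ℕ} (hn : 2 ≤ n) {y : ℝ} (hy : 0 ≤ y) (hyn : y ≤ n) :
    exp (-2) ≤ (1 - (n:ℝ)⁻¹) ^ y := by
  have hn' : (2:ℝ) ≤ n := by exact_mod_cast hn
  -- `exp (-2t) ≤ 1 - t` for `0 ≤ t ≤ 1/2`, since `(1 - t) (1 + 2t) ≥ 1` there
  have hbase : exp (-(2 * (n:ℝ)⁻¹)) ≤ 1 - (n:ℝ)⁻¹ := by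
    have ht : (n:ℝ)⁻¹ ≤ 1/2 := by rw [inv_le_comm₀ (by positivity) (by norm_num)]; linarith
    have := add_one_le_exp (2 * (n:ℝ)⁻¹)
    rw [exp_neg, inv_le_iff_one_le_mul₀' (exp_pos _)]
    nlinarith [inv_nonneg.2 (Nat.cast_nonneg n : (0:ℝ) ≤ n)]
  calc exp (-2) ≤ exp (-(2 * (n:ℝ)⁻¹) * y) := by
        rw [exp_le_exp, neg_mul, neg_le_neg_iff, mul_assoc, ← div_eq_inv_mul]
        nlinarith [(div_le_one (by positivity : (0:ℝ) < n)).2 hyn]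
    _ = exp (-(2 * (n:ℝ)⁻¹)) ^ y := exp_mul _ _
    _ ≤ (1 - (n:ℝ)⁻¹) ^ y := rpow_le_rpow (exp_pos _).le hbase hy

lemma In_pos (n : ℕ) : 0 < In n := by
  refine intervalIntegral.intervalIntegral_pos_of_pos_on
    (Continuous.intervalIntegrable (by fun_prop) _ _) (fun x hx => ?_) (by norm_num)
  have : 0 < 1 - x ^ 2 := by nlinarith [hx.1, hx.2]
  positivity

lemma In_le_two (n : ℕ) : In n ≤ 2 := by
  have h : In n ≤ ∫ _ in (-1:ℝ)..1, (1:ℝ) := by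
    refine intervalIntegral.integral_mono_on (by norm_num)
      (Continuous.intervalIntegrable (by fun_prop) _ _) intervalIntegrable_const fun x hx => ?_
    exact pow_le_one₀ (by nlinarith [hx.1, hx.2]) (by nlinarith)
  simpa [one_add_one_eq_two] using h

lemma two_rpow_neg_half_le_In_rpow_neg_half (n : ℕ) :
    (2:ℝ) ^ (-(1:ℝ)/2) ≤ In n ^ (-(1:ℝ)/2) :=
  rpow_le_rpow_of_nonpos (In_pos n) (In_le_two n) (by norm_num)

noncomputable def chiDeriv (n : ℕ) (x : ℝ) : ℝ :=
  In n ^ (-(1:ℝ)/2) * (-(n * x) * (1 - x ^ 2) ^ ((n : ℝ) / 2 - 1))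

lemma hasDerivAt_chi (n : ℕ) {x : ℝ} (hx : x ∈ Set.Ioo (-1:ℝ) 1) :
    HasDerivAt (chi n) (chiDeriv n x) x := by
  have hpos : 0 < 1 - x ^ 2 := by nlinarith [hx.1, hx.2]
  have h := ((((hasDerivAt_pow 2 x).const_sub 1).rpow_const (p := (n:ℝ)/2)
    (Or.inl hpos.ne')).const_mul (In n ^ (-(1:ℝ)/2)))
  refine (h.congr_deriv (by simp only [chiDeriv]; push_cast; ring)).congr_of_eventuallyEq ?_
  filter_upwards [isOpen_Ioo.mem_nhds hx] with y hy
  simp [chi, hy.1.le, hy.2.le]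

lemma fderiv_xiBump_apply_single (D : ℕ) {r : ℝ} (n : ℕ) {p : EuclideanSpace ℝ (Fin D)}
    (hp : ∀ β, p β / r ∈ Set.Ioo (-1:ℝ) 1) (α : Fin D) :
    fderiv ℝ (xiBump D r n) p (EuclideanSpace.single α 1) =
      r ^ (-(D:ℝ)/2) * ((∏ γ ∈ univ.erase α, chi n (p γ / r)) * (chiDeriv n (p α / r) / r)) := by
  have hg : ∀ β, HasDerivAt (fun t => chi n (t / r)) (chiDeriv n (p β / r) / r) (p β) := by
    intro β
    refine ((hasDerivAt_chi n (hp β)).scomp (p β) ((hasDerivAt_id _).div_const r)).congr_deriv ?_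
    simp [div_eq_mul_inv, mul_comm]
  exact fderiv_const_mul_prod_apply_single (g' := fun t => chiDeriv n (t / r) / r) hg _ α

lemma neg_epsShift_apply_div (D : ℕ) {r : ℝ} (hr : r ≠ 0) (n : ℕ) (β : Fin D) :
    (-(epsShift D r n)) β / r = -(√n)⁻¹ := by
  simp only [epsShift, PiLp.neg_apply]
  field_simp

lemma neg_inv_sqrt_mem_Ioo {n : ℕ} (hn : 2 ≤ n) : -(√n)⁻¹ ∈ Set.Ioo (-1:ℝ) 1 := by
  have h1 : 1 < √n := by rw [lt_sqrt zero_le_one]; exact_mod_cast (by omega : 1 ^ 2 < n)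
  have h0 : 0 < (√n)⁻¹ := by positivity
  exact ⟨neg_lt_neg (inv_lt_one_of_one_lt₀ h1), by linarith⟩

lemma fderiv_xiBump_neg_epsShift (D : ℕ) {r : ℝ} (hr : r ≠ 0) {n : ℕ} (hn : 2 ≤ n) (α : Fin D) :
    fderiv ℝ (xiBump D r n) (-(epsShift D r n)) (EuclideanSpace.single α 1) =
      r ^ (-(D:ℝ)/2) * (chi n (-(√n)⁻¹) ^ (D - 1) * (chiDeriv n (-(√n)⁻¹) / r)) := by
  rw [fderiv_xiBump_apply_single D n
    (fun β => neg_epsShift_apply_div D hr n β ▸ neg_inv_sqrt_mem_Ioo hn)]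
  simp only [neg_epsShift_apply_div D hr, prod_const, card_erase_of_mem (mem_univ α), card_univ,
    Fintype.card_fin]

lemma chi_neg_inv_sqrt {n : ℕ} (hn : 2 ≤ n) :
    chi n (-(√n)⁻¹) = In n ^ (-(1:ℝ)/2) * (1 - (n:ℝ)⁻¹) ^ ((n:ℝ)/2) := by
  have hmem := Set.Ioo_subset_Icc_self (neg_inv_sqrt_mem_Ioo hn)
  simp [chi, hmem, inv_pow, sq_sqrt (Nat.cast_nonneg n)]

lemma chiDeriv_neg_inv_sqrt (n : ℕ) :
    chiDeriv n (-(√n)⁻¹) = In n ^ (-(1:ℝ)/2) * (√n * (1 - (n:ℝ)⁻¹) ^ ((n:ℝ)/2 - 1)) := by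
  simp [chiDeriv, inv_pow, sq_sqrt (Nat.cast_nonneg n), ← div_eq_mul_inv, div_sqrt]

lemma le_chi_neg_inv_sqrt {n : ℕ} (hn : 2 ≤ n) :
    (2:ℝ) ^ (-(1:ℝ)/2) * exp (-2) ≤ chi n (-(√n)⁻¹) := by
  rw [chi_neg_inv_sqrt hn]
  have hn' : (2:ℝ) ≤ n := by exact_mod_cast hn
  exact mul_le_mul (two_rpow_neg_half_le_In_rpow_neg_half n)
    (exp_neg_two_le_one_sub_inv_rpow hn (by positivity) (by linarith)) (exp_pos _).le
    (rpow_nonneg (In_pos n).le _)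

lemma le_chiDeriv_neg_inv_sqrt {n : ℕ} (hn : 2 ≤ n) :
    (2:ℝ) ^ (-(1:ℝ)/2) * exp (-2) * √n ≤ chiDeriv n (-(√n)⁻¹) := by
  rw [chiDeriv_neg_inv_sqrt, mul_assoc, mul_comm (exp (-2))]
  have hn' : (2:ℝ) ≤ n := by exact_mod_cast hn
  exact mul_le_mul (two_rpow_neg_half_le_In_rpow_neg_half n)
    (mul_le_mul_of_nonneg_left (exp_neg_two_le_one_sub_inv_rpow hn (by linarith) (by linarith))
      (sqrt_nonneg _)) (by positivity) (rpow_nonneg (In_pos n).le _)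

theorem tendsto_partialDeriv_xiBump_atTop_general
    (D : ℕ) (r : ℝ) (hr : 0 < r) (α : Fin D) :
    Tendsto (fun n : ℕ =>
        fderiv ℝ (xiBump D r n) (-(epsShift D r n)) (EuclideanSpace.single α 1))
      atTop atTop := by
  set c : ℝ := (2:ℝ) ^ (-(1:ℝ)/2) * exp (-2)
  have hc : 0 < c := by positivity
  have hK : 0 < r ^ (-(D:ℝ)/2) * (c ^ (D - 1) * (c / r)) := by positivity
  refine tendsto_atTop_mono' _ ?_
    ((tendsto_sqrt_atTop.comp tendsto_natCast_atTop_atTop).const_mul_atTop hK)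
  filter_upwards [eventually_ge_atTop 2] with n hn
  rw [fderiv_xiBump_neg_epsShift D hr.ne' hn]
  calc r ^ (-(D:ℝ)/2) * (c ^ (D - 1) * (c / r)) * √n
      = r ^ (-(D:ℝ)/2) * (c ^ (D - 1) * (c * √n / r)) := by ring
    _ ≤ _ := by
      have hchi := le_chi_neg_inv_sqrt hn
      gcongr r ^ _ * (?_ ^ _ * (?_ / _))
      exacts [pow_nonneg (hc.le.trans hchi) _, le_chiDeriv_neg_inv_sqrt hn]

/-- For `r > 0`, `D ≥ 1` and each coordinate `α`, the partial derivative
`∂_α ξ_n` evaluated at `−ε_n` tends to `+∞` as `n → ∞`. -/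
theorem tendsto_partialDeriv_xiBump_atTop
    (D : ℕ) (hD : 1 ≤ D) (r : ℝ) (hr : 0 < r) (α : Fin D) :
    Tendsto (fun n : ℕ =>
        fderiv ℝ (xiBump D r n) (-(epsShift D r n)) (EuclideanSpace.single α 1))
      atTop atTop :=
  tendsto_partialDeriv_xiBump_atTop_general D r hr α
end

section
/- Let K : ℝ^D → ℝ be a bounded continuous nonnegative even function with ∫ K dλ = 1, let q be a continuous compactly supported probability density with (q∗K)(x) > 0 for all x ∈ ℝ^D, and let h be a continuous compactly supported function. Then the function F(t) = ∫ q(x) log(((q + t h)∗K)(x)) dx is differentiable at t = 0, with F'(0) = ∫ h(x) · ((q / (q∗K)) ∗ K)(x) dx; consequently the Gâteaux derivative of q ↦ E_q[log(q∗K)] = ∫ q log(q∗K) dx in direction h equals ∫ h(x) [ log((q∗K)(x)) + ((q/(q∗K)) ∗ K)(x) ] dx. -/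
open MeasureTheory

/-- Convolution of a scalar function `f` with a kernel `K` on `ℝ^D`:
`(f∗K)(x) = ∫ f(y) K(x − y) dy`. -/
noncomputable def convK {D : ℕ} (K f : EuclideanSpace ℝ (Fin D) → ℝ)
    (x : EuclideanSpace ℝ (Fin D)) : ℝ :=
  ∫ y, f y * K (x - y)

/-!
Convolution is linear, so `(q + t h) ∗ K = q ∗ K + t (h ∗ K)`. Since `q ∗ K` is continuous and
positive, it is bounded below on the compact support of `q`, hence so is `q ∗ K + t (h ∗ K)` for
small `t`; this dominates the `t`-derivative `q (h ∗ K) / (q ∗ K + t (h ∗ K))` and allows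
differentiation under the integral, giving `F'(0) = ∫ q (h ∗ K) / (q ∗ K)`. For even `K`, Fubini
moves the convolution from `h` onto `q / (q ∗ K)`. The Gâteaux derivative picks up the additional
product-rule term `∫ h log (q ∗ K)`.
-/

open Filter Topology

lemma IsCompact.exists_pos_eventually_le_add_mul {X : Type*} [TopologicalSpace X] {S : Set X}
    {A B : X → ℝ} (hS : IsCompact S) (hA : ContinuousOn A S) (hApos : ∀ x ∈ S, 0 < A x)
    (hB : ContinuousOn B S) :
    ∃ m > 0, ∀ᶠ t in 𝓝 (0 : ℝ), ∀ x ∈ S, m ≤ A x + t * B x := by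
  obtain ⟨a, ha, haA⟩ := hS.exists_forall_le' hA hApos
  obtain ⟨M, hM⟩ := hS.exists_bound_of_continuousOn hB
  have hsmall : ∀ᶠ t in 𝓝 (0 : ℝ), |t| * M < a / 2 := by
    have hlim : Tendsto (fun t : ℝ => |t| * M) (𝓝 0) (𝓝 0) := by
      simpa using (continuous_abs.tendsto (0 : ℝ)).mul_const M
    exact hlim.eventually_lt_const (by positivity)
  refine ⟨a / 2, by positivity, hsmall.mono fun t ht x hx => ?_⟩
  have htB : |t * B x| ≤ |t| * M := by
    rw [abs_mul]
    exact mul_le_mul_of_nonneg_left (hM x hx) (abs_nonneg t)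
  linarith [neg_abs_le (t * B x), haA x hx]

section IntegralMulLog

variable {X : Type*} [TopologicalSpace X] [T2Space X] [MeasurableSpace X] [OpensMeasurableSpace X]
  {μ : Measure X} [IsFiniteMeasureOnCompacts μ] {A B f g : X → ℝ}

lemma integrable_mul_of_continuousOn_tsupport (hf : Continuous f) (hfs : HasCompactSupport f)
    (hg : ContinuousOn g (tsupport f)) : Integrable (fun x => f x * g x) μ := by
  refine IntegrableOn.integrable_of_forall_notMem_eq_zero
    ((hf.continuousOn.mul hg).integrableOn_compact hfs) fun x hx => ?_
  simp [image_eq_zero_of_notMem_tsupport hx]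

lemma eventually_integrable_mul_log_add_mul (hA : Continuous A)
    (hApos : ∀ x ∈ tsupport f, 0 < A x) (hB : Continuous B) (hf : Continuous f)
    (hfs : HasCompactSupport f) :
    ∀ᶠ t : ℝ in 𝓝 0, Integrable (fun x => f x * Real.log (A x + t * B x)) μ := by
  obtain ⟨m, hm, hmA⟩ :=
    hfs.isCompact.exists_pos_eventually_le_add_mul hA.continuousOn hApos hB.continuousOn
  filter_upwards [hmA] with t ht
  exact integrable_mul_of_continuousOn_tsupport hf hfs <|
    (hA.add (continuous_const.mul hB)).continuousOn.log fun x hx => (hm.trans_le (ht x hx)).ne'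

lemma hasDerivAt_integral_mul_log_add_mul (hA : Continuous A)
    (hApos : ∀ x ∈ tsupport f, 0 < A x) (hB : Continuous B) (hf : Continuous f)
    (hfs : HasCompactSupport f) :
    HasDerivAt (fun t : ℝ => ∫ x, f x * Real.log (A x + t * B x) ∂μ)
      (∫ x, f x * B x / A x ∂μ) 0 := by
  obtain ⟨m, hm, hmA⟩ :=
    hfs.isCompact.exists_pos_eventually_le_add_mul hA.continuousOn hApos hB.continuousOn
  obtain ⟨M, hM⟩ := hfs.isCompact.exists_bound_of_continuousOn hB.continuousOn
  have hint := eventually_integrable_mul_log_add_mul (μ := μ) hA hApos hB hf hfs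
  have hderiv := hasDerivAt_integral_of_dominated_loc_of_deriv_le (μ := μ) (x₀ := (0 : ℝ))
    (F := fun t x => f x * Real.log (A x + t * B x))
    (F' := fun t x => f x * B x / (A x + t * B x)) (bound := fun x => |f x| * (M / m))
    hmA (hint.mono fun _ ht => ht.aestronglyMeasurable) hint.self_of_nhds
    ((hf.mul hB).measurable.div (hA.add (continuous_const.mul hB)).measurable).aestronglyMeasurable
    (ae_of_all _ fun x t ht => ?bound)
    ((hf.abs.mul continuous_const).integrable_of_hasCompactSupport hfs.abs.mul_right)
    (ae_of_all _ fun x t ht => ?deriv)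
  · simpa using hderiv.2
  case bound =>
    by_cases hx : x ∈ tsupport f
    · have hM0 : 0 ≤ M := (norm_nonneg _).trans (hM x hx)
      rw [Real.norm_eq_abs, abs_div, abs_mul, abs_of_pos (hm.trans_le (ht x hx)), mul_div_assoc]
      exact mul_le_mul_of_nonneg_left (div_le_div₀ hM0 (hM x hx) hm (ht x hx)) (abs_nonneg _)
    · simp [image_eq_zero_of_notMem_tsupport hx]
  case deriv =>
    by_cases hx : f x = 0
    · simpa [hx] using hasDerivAt_const t (0 : ℝ)
    · have hpos := hm.trans_le (ht x (subset_tsupport f hx))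
      simpa [mul_div_assoc] using
        (((hasDerivAt_mul_const (B x)).const_add (A x)).log hpos.ne').const_mul (f x)

lemma hasDerivAt_integral_add_mul_mul_log (hA : Continuous A) (hApos : ∀ x, 0 < A x)
    (hB : Continuous B) (hf : Continuous f) (hfs : HasCompactSupport f) (hg : Continuous g)
    (hgs : HasCompactSupport g) :
    HasDerivAt (fun t : ℝ => ∫ x, (f x + t * g x) * Real.log (A x + t * B x) ∂μ)
      (∫ x, f x * B x / A x ∂μ + ∫ x, g x * Real.log (A x) ∂μ) 0 := by
  have hsplit : (fun t : ℝ => ∫ x, (f x + t * g x) * Real.log (A x + t * B x) ∂μ) =ᶠ[𝓝 0]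
      fun t => (∫ x, f x * Real.log (A x + t * B x) ∂μ)
        + t * ∫ x, g x * Real.log (A x + t * B x) ∂μ := by
    filter_upwards
      [eventually_integrable_mul_log_add_mul (μ := μ) hA (fun x _ => hApos x) hB hf hfs,
        eventually_integrable_mul_log_add_mul (μ := μ) hA (fun x _ => hApos x) hB hg hgs]
      with t hft hgt
    rw [← integral_const_mul, ← integral_add hft (hgt.const_mul t)]
    congr 1 with x
    ring
  have hprod : HasDerivAt (fun t : ℝ => t * ∫ x, g x * Real.log (A x + t * B x) ∂μ)
      (∫ x, g x * Real.log (A x) ∂μ) 0 := by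
    simpa [Pi.mul_def] using (hasDerivAt_id' (0 : ℝ)).mul
      (hasDerivAt_integral_mul_log_add_mul (μ := μ) hA (fun x _ => hApos x) hB hg hgs)
  exact ((hasDerivAt_integral_mul_log_add_mul hA (fun x _ => hApos x) hB hf hfs).add
    hprod).congr_of_eventuallyEq hsplit

end IntegralMulLog

section Convolution

variable {D : ℕ} {K f g : EuclideanSpace ℝ (Fin D) → ℝ}

lemma integrable_mul_comp_sub (hK : Continuous K) (hf : Continuous f) (hfs : HasCompactSupport f)
    (x : EuclideanSpace ℝ (Fin D)) : Integrable (fun y => f y * K (x - y)) :=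
  (hf.mul (hK.comp (continuous_const.sub continuous_id))).integrable_of_hasCompactSupport
    hfs.mul_right

lemma convK_eq_convolution :
    convK K f = convolution f K (ContinuousLinearMap.lsmul ℝ ℝ) volume := by
  funext x
  simp [convK, convolution]

lemma continuous_convK (hK : Continuous K) (hf : Continuous f) (hfs : HasCompactSupport f) :
    Continuous (convK K f) := by
  rw [convK_eq_convolution]
  exact hfs.continuous_convolution_left _ hf hK.locallyIntegrable

lemma convK_add_mul (hK : Continuous K) (hf : Continuous f) (hfs : HasCompactSupport f)
    (hg : Continuous g) (hgs : HasCompactSupport g) (t : ℝ) (x : EuclideanSpace ℝ (Fin D)) :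
    convK K (fun y => f y + t * g y) x = convK K f x + t * convK K g x := by
  rw [convK, convK, convK, ← integral_const_mul,
    ← integral_add (integrable_mul_comp_sub hK hf hfs x)
      ((integrable_mul_comp_sub hK hg hgs x).const_mul t)]
  congr 1 with y
  ring

lemma integral_mul_convK_comm (hK : Continuous K) (hKeven : ∀ z, K (-z) = K z)
    (hf : Continuous f) (hfs : HasCompactSupport f) (hg : Continuous g)
    (hgs : HasCompactSupport g) :
    ∫ x, f x * convK K g x = ∫ y, g y * convK K f y := by
  set F := fun x y : EuclideanSpace ℝ (Fin D) => f x * (g y * K (x - y))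
  have hFcont : Continuous (Function.uncurry F) :=
    (hf.comp continuous_fst).mul ((hg.comp continuous_snd).mul
      (hK.comp (continuous_fst.sub continuous_snd)))
  have hFsupp : HasCompactSupport (Function.uncurry F) := by
    refine HasCompactSupport.intro (hfs.prod hgs) fun p hp => ?_
    rcases not_and_or.mp (Set.mem_prod.not.mp hp) with hp | hp
    · simp [F, Function.uncurry_def, image_eq_zero_of_notMem_tsupport hp]
    · simp [F, Function.uncurry_def, image_eq_zero_of_notMem_tsupport hp]
  have hFint : Integrable (Function.uncurry F) (volume.prod volume) := by
    rw [← Measure.volume_eq_prod]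
    exact hFcont.integrable_of_hasCompactSupport hFsupp
  calc ∫ x, f x * convK K g x = ∫ x, ∫ y, F x y := by
        simp only [F, convK, integral_const_mul]
    _ = ∫ y, ∫ x, F x y := integral_integral_swap hFint
    _ = ∫ y, g y * convK K f y := by
        simp only [F, convK, ← integral_const_mul]
        congr 1 with y
        congr 1 with x
        rw [← hKeven, neg_sub]
        ring

end Convolution

theorem blob_first_variation_general
    (D : ℕ) (K : EuclideanSpace ℝ (Fin D) → ℝ)
    (hKcont : Continuous K) (hKeven : ∀ z, K (-z) = K z)
    (q : EuclideanSpace ℝ (Fin D) → ℝ)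
    (hqcont : Continuous q) (hqsupp : HasCompactSupport q)
    (hqKpos : ∀ x, 0 < convK K q x)
    (h : EuclideanSpace ℝ (Fin D) → ℝ)
    (hhcont : Continuous h) (hhsupp : HasCompactSupport h) :
    HasDerivAt
      (fun t : ℝ => ∫ x, q x * Real.log (convK K (fun y => q y + t * h y) x))
      (∫ x, h x * convK K (fun y => q y / convK K q y) x) 0
    ∧ HasDerivAt
        (fun t : ℝ =>
          ∫ x, (q x + t * h x) * Real.log (convK K (fun y => q y + t * h y) x))
        (∫ x, h x * (Real.log (convK K q x)
            + convK K (fun y => q y / convK K q y) x)) 0 := by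
  have hA := continuous_convK hKcont hqcont hqsupp
  have hB := continuous_convK hKcont hhcont hhsupp
  have hc : Continuous fun y => q y / convK K q y := hqcont.div hA fun x => (hqKpos x).ne'
  have hcs : HasCompactSupport fun y => q y / convK K q y :=
    hqsupp.mono fun x hx hqx => hx (by simp [hqx])
  have hadjoint : ∫ x, q x * convK K h x / convK K q x
      = ∫ x, h x * convK K (fun y => q y / convK K q y) x := by
    rw [← integral_mul_convK_comm hKcont hKeven hc hcs hhcont hhsupp]
    simp only [mul_div_right_comm]
  simp only [convK_add_mul hKcont hqcont hqsupp hhcont hhsupp]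
  refine ⟨hadjoint ▸
    hasDerivAt_integral_mul_log_add_mul hA (fun x _ => hqKpos x) hB hqcont hqsupp, ?_⟩
  have hlog : Integrable fun x => h x * Real.log (convK K q x) :=
    (hhcont.mul (hA.log fun x => (hqKpos x).ne')).integrable_of_hasCompactSupport hhsupp.mul_right
  have hconv : Integrable fun x => h x * convK K (fun y => q y / convK K q y) x :=
    (hhcont.mul (continuous_convK hKcont hc hcs)).integrable_of_hasCompactSupport hhsupp.mul_right
  simp only [mul_add, integral_add hlog hconv, ← hadjoint, add_comm (∫ x, h x * Real.log _)]
  exact hasDerivAt_integral_add_mul_mul_log hA hqKpos hB hqcont hqsupp hhcont hhsupp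

/-- first variation of the smoothed-entropy functional, Blob method.
For a bounded continuous nonnegative even kernel `K` with `∫ K = 1`, a continuous compactly
supported probability density `q` with `(q∗K) > 0` everywhere, and a continuous compactly
supported perturbation `h`: the map `F(t) = ∫ q log((q + t h)∗K)` is differentiable at `t = 0`
with `F'(0) = ∫ h ((q/(q∗K))∗K)`, and the Gâteaux derivative of `q ↦ ∫ q log(q∗K)` in
direction `h` equals `∫ h (log(q∗K) + (q/(q∗K))∗K)`. -/
theorem blob_first_variation
    (D : ℕ) (K : EuclideanSpace ℝ (Fin D) → ℝ)
    (hKcont : Continuous K) (CK : ℝ) (hKbdd : ∀ z, |K z| ≤ CK)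
    (hKnonneg : ∀ z, 0 ≤ K z) (hKeven : ∀ z, K (-z) = K z)
    (hKone : ∫ z, K z = 1)
    (q : EuclideanSpace ℝ (Fin D) → ℝ)
    (hqcont : Continuous q) (hqsupp : HasCompactSupport q)
    (hqnonneg : ∀ x, 0 ≤ q x) (hqone : ∫ x, q x = 1)
    (hqKpos : ∀ x, 0 < convK K q x)
    (h : EuclideanSpace ℝ (Fin D) → ℝ)
    (hhcont : Continuous h) (hhsupp : HasCompactSupport h) :
    HasDerivAt
      (fun t : ℝ => ∫ x, q x * Real.log (convK K (fun y => q y + t * h y) x))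
      (∫ x, h x * convK K (fun y => q y / convK K q y) x) 0
    ∧ HasDerivAt
        (fun t : ℝ =>
          ∫ x, (q x + t * h x) * Real.log (convK K (fun y => q y + t * h y) x))
        (∫ x, h x * (Real.log (convK K q x)
            + convK K (fun y => q y / convK K q y) x)) 0 :=
  blob_first_variation_general D K hKcont hKeven q hqcont hqsupp hqKpos h hhcont hhsupp
end
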